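/- Let n ≥ 1 be an integer, M > 0, and let φ : ℝⁿ → ℝ satisfy φ(0) = 0 and |φ(x)−φ(y)| ≤ M|x−y| for all x,y ∈ ℝⁿ. Set C_M = 10(1+M). Let T be a surjective isometry of ℝ^{1+n} ≅ ℝ × ℝⁿ, let r > 0, and let Ω ⊆ ℝ^{1+n} be a set satisfying Ω ∩ T(R(C_M r)) = T(Ω_φ) ∩ T(R(C_M r)) and ∂Ω ∩ T(R(C_M r)) = T(∂Ω_φ) ∩ T(R(C_M r)). Then there exists a constant c > 0, depending only on M, such that for every x ∈ ℝⁿ with |x| < r and every t with 0 < t ≤ 3(1+M)r, the point A = T((φ(x)+t, x)) lies in Ω and satisfies c·t ≤ dist(A, ∂Ω) ≤ t. -/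

import Mathlib

open MeasureTheory Metric Set
open scoped ENNReal NNReal

/-- `ℝ^{1+n} = ℝ × ℝⁿ` with the Euclidean (L²) norm. -/
noncomputable abbrev UHS (n : ℕ) := WithLp 2 (ℝ × EuclideanSpace ℝ (Fin n))

noncomputable def mkH (n : ℕ) (t : ℝ) (x : EuclideanSpace ℝ (Fin n)) : UHS n :=
  (WithLp.equiv 2 (ℝ × EuclideanSpace ℝ (Fin n))).symm (t, x)

noncomputable def fstH {n : ℕ} (X : UHS n) : ℝ :=
  ((WithLp.equiv 2 (ℝ × EuclideanSpace ℝ (Fin n))) X).1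

noncomputable def sndH {n : ℕ} (X : UHS n) : EuclideanSpace ℝ (Fin n) :=
  ((WithLp.equiv 2 (ℝ × EuclideanSpace ℝ (Fin n))) X).2

/-- The special Lipschitz domain `Ω_φ = {(t,x) : t > φ(x)}`. -/
def specialDomain (n : ℕ) (φ : EuclideanSpace ℝ (Fin n) → ℝ) : Set (UHS n) :=
  {X | φ (sndH X) < fstH X}

/-- The open cylinder `R(s) = {(t,x) : |x| < s, |t| < (1+M)s}`. -/
def cylinder (n : ℕ) (M s : ℝ) : Set (UHS n) :=
  {X | ‖sndH X‖ < s ∧ |fstH X| < (1 + M) * s}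

/-!
Pulling back by `T` reduces everything to `T = id`. The constant is `c = (1 + M)⁻¹`.
Inside the cylinder `R(10(1+M)r)` the boundary of `Ω` is the graph of `φ`, and a graph point
`(φ y, y)` at distance `d` from `A = (φ x + t, x)` satisfies `t ≤ (φ x + t - φ y) + M |x - y| ≤
(1 + M) d`. Boundary points outside the cylinder are at distance at least `3r ≥ t / (1 + M)`,
because `A` lies that deep inside it. The graph point `(φ x, x)` right below `A` gives `≤ t`.
-/

section UHS

variable {n : ℕ}

lemma mkH_fstH_sndH (X : UHS n) : mkH n (fstH X) (sndH X) = X := rfl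

lemma continuous_fstH : Continuous (fstH (n := n)) := WithLp.continuous_fst ..

lemma continuous_sndH : Continuous (sndH (n := n)) := WithLp.continuous_snd ..

lemma abs_fstH_sub_le_dist (X Y : UHS n) : |fstH X - fstH Y| ≤ dist X Y :=
  WithLp.dist_fst_le X Y

lemma norm_sndH_sub_le_dist (X Y : UHS n) : ‖sndH X - sndH Y‖ ≤ dist X Y :=
  (dist_eq_norm (sndH X) (sndH Y)) ▸ WithLp.dist_snd_le X Y

lemma dist_mkH_mkH_same (a b : ℝ) (x : EuclideanSpace ℝ (Fin n)) :
    dist (mkH n a x) (mkH n b x) = |a - b| := by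
  rw [WithLp.prod_dist_eq_of_L2]
  change √(dist a b ^ 2 + dist x x ^ 2) = _
  rw [dist_self, Real.dist_eq]
  simp [Real.sqrt_sq_eq_abs]

end UHS

section specialDomain

variable {n : ℕ} {φ : EuclideanSpace ℝ (Fin n) → ℝ}

lemma isOpen_specialDomain (hφ : Continuous φ) : IsOpen (specialDomain n φ) :=
  isOpen_lt (hφ.comp continuous_sndH) continuous_fstH

lemma frontier_specialDomain_subset (hφ : Continuous φ) :
    frontier (specialDomain n φ) ⊆ {X | fstH X = φ (sndH X)} := fun _ hX =>
  (frontier_lt_subset_eq (hφ.comp continuous_sndH) continuous_fstH hX).symm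

lemma mkH_mem_frontier_specialDomain (hφ : Continuous φ) (x : EuclideanSpace ℝ (Fin n)) :
    mkH n (φ x) x ∈ frontier (specialDomain n φ) := by
  rw [(isOpen_specialDomain hφ).frontier_eq]
  refine ⟨Metric.mem_closure_iff.2 fun ε hε => ⟨mkH n (φ x + ε / 2) x, ?_, ?_⟩, ?_⟩
  · change φ x < φ x + ε / 2
    linarith
  · rw [dist_mkH_mkH_same, sub_add_cancel_left, abs_neg, abs_of_pos (half_pos hε)]
    exact half_lt_self hε
  · exact lt_irrefl (φ x)

lemma div_one_add_le_dist_graph {K : ℝ≥0} (hφ : LipschitzWith K φ)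
    (t : ℝ) (x y : EuclideanSpace ℝ (Fin n)) :
    t / (1 + K) ≤ dist (mkH n (φ x + t) x) (mkH n (φ y) y) := by
  set d := dist (mkH n (φ x + t) x) (mkH n (φ y) y)
  have h_vert : φ x + t - φ y ≤ d :=
    (le_abs_self _).trans (abs_fstH_sub_le_dist (mkH n (φ x + t) x) (mkH n (φ y) y))
  have h_horiz : ‖x - y‖ ≤ d := norm_sndH_sub_le_dist (mkH n (φ x + t) x) (mkH n (φ y) y)
  have h_lip : φ y - φ x ≤ K * ‖x - y‖ := by
    have := hφ.dist_le_mul y x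
    rw [Real.dist_eq, dist_comm, dist_eq_norm] at this
    exact (le_abs_self _).trans this
  rw [div_le_iff₀ (by positivity)]
  nlinarith [K.coe_nonneg]

end specialDomain

lemma le_dist_of_notMem_cylinder {n : ℕ} {M s δ : ℝ} {A W : UHS n}
    (h_snd : ‖sndH A‖ + δ ≤ s) (h_fst : |fstH A| + δ ≤ (1 + M) * s)
    (hW : W ∉ cylinder n M s) : δ ≤ dist A W := by
  simp only [_root_.cylinder, mem_ofPred_eq, not_and_or, not_lt] at hW
  rcases hW with hW | hW
  · have := norm_sub_norm_le (sndH W) (sndH A)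
    rw [norm_sub_rev] at this
    linarith [norm_sndH_sub_le_dist A W]
  · have := abs_sub_abs_le_abs_sub (fstH W) (fstH A)
    rw [abs_sub_comm (fstH W)] at this
    linarith [abs_fstH_sub_le_dist A W]

lemma IsometryEquiv.infDist_apply {E : Type*} [PseudoMetricSpace E] (T : E ≃ᵢ E)
    (a : E) (s : Set E) : infDist (T a) s = infDist a (T ⁻¹' s) := by
  rw [← infDist_image T.isometry (x := a) (t := T ⁻¹' s), image_preimage_eq s T.surjective]

lemma IsometryEquiv.preimage_frontier {E : Type*} [PseudoMetricSpace E] (T : E ≃ᵢ E)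
    (s : Set E) : T ⁻¹' frontier s = frontier (T ⁻¹' s) :=
  T.toHomeomorph.preimage_frontier s

lemma IsometryEquiv.inter_image_eq_iff {E : Type*} [PseudoMetricSpace E] (T : E ≃ᵢ E)
    (Ω D K : Set E) : Ω ∩ T '' K = T '' D ∩ T '' K ↔ T ⁻¹' Ω ∩ K = D ∩ K := by
  rw [← image_preimage_inter, ← image_inter T.injective, (image_injective.2 T.injective).eq_iff]

theorem corkscrew_of_eq_specialDomain_on_cylinder {n : ℕ} {M : ℝ} (hM : 0 ≤ M)
    {φ : EuclideanSpace ℝ (Fin n) → ℝ} (hφ0 : φ 0 = 0)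
    (hLip : ∀ x y, |φ x - φ y| ≤ M * ‖x - y‖) {r : ℝ} (hr : 0 < r) {Ω : Set (UHS n)}
    (hΩ : Ω ∩ cylinder n M (10 * (1 + M) * r) =
      specialDomain n φ ∩ cylinder n M (10 * (1 + M) * r))
    (hFr : frontier Ω ∩ cylinder n M (10 * (1 + M) * r) =
      frontier (specialDomain n φ) ∩ cylinder n M (10 * (1 + M) * r))
    {x : EuclideanSpace ℝ (Fin n)} {t : ℝ} (hx : ‖x‖ < r) (ht : 0 < t)
    (ht3 : t ≤ 3 * (1 + M) * r) :
    mkH n (φ x + t) x ∈ Ω ∧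
      t / (1 + M) ≤ infDist (mkH n (φ x + t) x) (frontier Ω) ∧
      infDist (mkH n (φ x + t) x) (frontier Ω) ≤ t := by
  set s := 10 * (1 + M) * r
  set A := mkH n (φ x + t) x
  set B := mkH n (φ x) x
  have hφ : LipschitzWith ⟨M, hM⟩ φ := LipschitzWith.of_dist_le_mul fun x y => by
    rw [Real.dist_eq, dist_eq_norm]
    exact hLip x y
  have hφx : |φ x| ≤ M * r := by
    simpa [hφ0] using (hLip x 0).trans (mul_le_mul_of_nonneg_left (by simpa using hx.le) hM)
  have ht_div : t / (1 + M) ≤ 3 * r := by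
    rw [div_le_iff₀ (by positivity)]
    linarith
  have h_snd : ‖sndH A‖ + 3 * r ≤ s := by
    change ‖x‖ + 3 * r ≤ s
    nlinarith
  have h_fst : |fstH A| + 3 * r ≤ (1 + M) * s := by
    change |φ x + t| + 3 * r ≤ (1 + M) * s
    nlinarith [abs_add_le (φ x) t, abs_of_pos ht]
  have hA_cyl : A ∈ cylinder n M s := ⟨by linarith, by linarith⟩
  have hB_cyl : B ∈ cylinder n M s := by
    refine ⟨?_, ?_⟩
    · change ‖x‖ < s
      nlinarith
    · change |φ x| < (1 + M) * s
      nlinarith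
  have hA : A ∈ Ω := (hΩ.symm.subset ⟨show φ x < φ x + t by linarith, hA_cyl⟩).1
  have hB : B ∈ frontier Ω :=
    (hFr.symm.subset ⟨mkH_mem_frontier_specialDomain hφ.continuous x, hB_cyl⟩).1
  refine ⟨hA, (le_infDist ⟨B, hB⟩).2 fun W hW => ?_, ?_⟩
  · by_cases hW_cyl : W ∈ cylinder n M s
    · have hW_graph : fstH W = φ (sndH W) := frontier_specialDomain_subset hφ.continuous
          (hFr.subset ⟨hW, hW_cyl⟩).1
      rw [← mkH_fstH_sndH W, hW_graph]
      exact div_one_add_le_dist_graph hφ t x (sndH W)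
    · exact ht_div.trans (le_dist_of_notMem_cylinder h_snd h_fst hW_cyl)
  · calc infDist A (frontier Ω) ≤ dist A B := infDist_le_dist_of_mem hB
      _ = t := by rw [dist_mkH_mkH_same, add_sub_cancel_left, abs_of_pos ht]

theorem statement16_general (n : ℕ) (M : ℝ) (hM : 0 < M) :
    ∃ c : ℝ, 0 < c ∧
      ∀ φ : EuclideanSpace ℝ (Fin n) → ℝ, φ 0 = 0 →
        (∀ x y : EuclideanSpace ℝ (Fin n), |φ x - φ y| ≤ M * ‖x - y‖) →
        ∀ (T : UHS n ≃ᵢ UHS n) (r : ℝ), 0 < r →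
          ∀ Ω : Set (UHS n),
            Ω ∩ T '' cylinder n M (10 * (1 + M) * r) =
              (T '' specialDomain n φ) ∩ T '' cylinder n M (10 * (1 + M) * r) →
            frontier Ω ∩ T '' cylinder n M (10 * (1 + M) * r) =
              (T '' frontier (specialDomain n φ)) ∩ T '' cylinder n M (10 * (1 + M) * r) →
            ∀ (x : EuclideanSpace ℝ (Fin n)) (t : ℝ), ‖x‖ < r →
              0 < t → t ≤ 3 * (1 + M) * r →
              T (mkH n (φ x + t) x) ∈ Ω ∧
              c * t ≤ Metric.infDist (T (mkH n (φ x + t) x)) (frontier Ω) ∧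
              Metric.infDist (T (mkH n (φ x + t) x)) (frontier Ω) ≤ t := by
  refine ⟨(1 + M)⁻¹, by positivity, fun φ hφ0 hLip T r hr Ω hΩ hFr x t hx ht ht3 => ?_⟩
  rw [T.inter_image_eq_iff] at hΩ hFr
  rw [T.preimage_frontier] at hFr
  rw [T.infDist_apply, T.preimage_frontier]
  obtain ⟨hA, h_lower, h_upper⟩ :=
    corkscrew_of_eq_specialDomain_on_cylinder hM.le hφ0 hLip hr hΩ hFr hx ht ht3
  exact ⟨hA, by rwa [inv_mul_eq_div], h_upper⟩

theorem statement16 (n : ℕ) (hn : 1 ≤ n) (M : ℝ) (hM : 0 < M) :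
    ∃ c : ℝ, 0 < c ∧
      ∀ φ : EuclideanSpace ℝ (Fin n) → ℝ, φ 0 = 0 →
        (∀ x y : EuclideanSpace ℝ (Fin n), |φ x - φ y| ≤ M * ‖x - y‖) →
        ∀ (T : UHS n ≃ᵢ UHS n) (r : ℝ), 0 < r →
          ∀ Ω : Set (UHS n),
            Ω ∩ T '' cylinder n M (10 * (1 + M) * r) =
              (T '' specialDomain n φ) ∩ T '' cylinder n M (10 * (1 + M) * r) →
            frontier Ω ∩ T '' cylinder n M (10 * (1 + M) * r) =
              (T '' frontier (specialDomain n φ)) ∩ T '' cylinder n M (10 * (1 + M) * r) →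
            ∀ (x : EuclideanSpace ℝ (Fin n)) (t : ℝ), ‖x‖ < r →
              0 < t → t ≤ 3 * (1 + M) * r →
              T (mkH n (φ x + t) x) ∈ Ω ∧
              c * t ≤ Metric.infDist (T (mkH n (φ x + t) x)) (frontier Ω) ∧
              Metric.infDist (T (mkH n (φ x + t) x)) (frontier Ω) ≤ t :=
  statement16_general n M hM
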